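/- arXiv:1904.10848 — 2 statements merged into one kernel-verified Lean document; each statement's English description precedes it below -/
import Mathlib

section
/- Let V₈ be an 8-dimensional complex vector space and let U₄ ⊆ U₆ ⊆ V₈ be subspaces with dim U₄ = 4 and dim U₆ = 6. Then for every y ∈ ⋀²U₄∧V₈ + ⋀³U₆ ⊆ ⋀³V₈ there exist subspaces V₂ ⊆ V₅ of V₈ with dim V₂ = 2, dim V₅ = 5, V₂ ⊆ U₄ ⊆ V₅ ⊆ U₆, and y ∈ ⋀³V₅ + V₂∧V₅∧V₈. -/
/-
Split `U₆ = U₄ ⊕ ⟨e₄, e₅⟩` and `V₈ = U₆ ⊕ ⟨e₆, e₇⟩`. Modulo `⋀²U₄∧V₈` every element of `⋀³U₆`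
is `u∧e₄∧e₅` with `u ∈ U₄`. Pick `u' ≠ 0` with `u ∈ ⟨u'⟩` and `U₄ = ⟨u'⟩ ⊕ C`; modulo
`u'∧U₄∧V₈` the rest of `y` lies in `⋀²C∧U₄ + ⋀²C∧e₄ + ⋀²C∧e₅ + ⋀²C∧e₆ + ⋀²C∧e₇`.
As `⋀³C` is a line, the components `β₆, β₇ ∈ ⋀²C` along `e₆, e₇` have a common nonzero
`x ∈ C` with `βᵢ∧x = 0`, and then `βᵢ ∈ x∧C`. Modulo `x∧C`, `⋀²C` is the line of `d₁∧d₂`, so the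
`e₄, e₅` components reduce to `d₁∧d₂∧g` with `g ∈ ⟨e₄, e₅⟩`. The flag is `V₂ = ⟨u', x⟩` and
`V₅ = U₄ + ⟨f⟩`, where `f ≠ 0` spans `g` (and `e₄∧e₅ ∈ f∧V₈`).
-/

open ExteriorAlgebra

noncomputable section

variable {V : Type*} [AddCommGroup V] [Module ℂ V]

/-- For subspaces `S, T, U` of a complex vector space `W`, the subspace `S∧T∧U` of `⋀³W`,
realized as the span, inside the exterior algebra, of all products `s∧t∧u` with
`s ∈ S`, `t ∈ T`, `u ∈ U`. In particular `wSpan S S ⊤ = ⋀²S∧W` and `wSpan S S S = ⋀³S`. -/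
def wSpan (S T U : Submodule ℂ V) : Submodule ℂ (ExteriorAlgebra ℂ V) :=
  Submodule.span ℂ {x | ∃ s ∈ S, ∃ t ∈ T, ∃ u ∈ U, x = ι ℂ s * ι ℂ t * ι ℂ u}

open Submodule Module

section DegreeOne

variable {R M : Type*} [CommRing R] [AddCommGroup M] [Module R M]

theorem exists_ne_zero_mem_span_singleton {S : Submodule R M} (hS : S ≠ ⊥) {g : M}
    (hg : g ∈ S) : ∃ f ∈ S, f ≠ 0 ∧ g ∈ R ∙ f := by
  by_cases hg0 : g = 0
  · obtain ⟨f, hf, hf0⟩ := exists_mem_ne_zero_of_ne_bot hS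
    exact ⟨f, hf, hf0, hg0 ▸ zero_mem _⟩
  · exact ⟨g, hg, hg0, mem_span_singleton_self g⟩

theorem ι_mul_ι_anticomm (x y : M) : ι R x * ι R y = -(ι R y * ι R x) :=
  eq_neg_of_add_eq_zero_left (ι_add_mul_swap x y)

theorem map_ι_span_singleton (a : M) : (R ∙ a).map (ι R) = R ∙ ι R a := by
  rw [map_span, Set.image_singleton]

theorem map_ι_mul_comm (S T : Submodule R M) :
    S.map (ι R) * T.map (ι R) = T.map (ι R) * S.map (ι R) := by
  have key : ∀ S T : Submodule R M, S.map (ι R) * T.map (ι R) ≤ T.map (ι R) * S.map (ι R) := by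
    intro S T
    rw [mul_le]
    rintro _ ⟨s, hs, rfl⟩ _ ⟨t, ht, rfl⟩
    rw [ι_mul_ι_anticomm]
    exact neg_mem (mul_mem_mul (mem_map_of_mem ht) (mem_map_of_mem hs))
  exact (key S T).antisymm (key T S)

theorem map_ι_mul_mul_right_comm (S T U : Submodule R M) :
    S.map (ι R) * T.map (ι R) * U.map (ι R) = S.map (ι R) * U.map (ι R) * T.map (ι R) := by
  rw [mul_assoc, map_ι_mul_comm T, ← mul_assoc]

theorem map_ι_mul_mul_mono {S S' T T' U U' : Submodule R M} (hS : S ≤ S') (hT : T ≤ T')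
    (hU : U ≤ U') :
    S.map (ι R) * T.map (ι R) * U.map (ι R) ≤ S'.map (ι R) * T'.map (ι R) * U'.map (ι R) :=
  mul_le_mul' (mul_le_mul' (map_mono hS) (map_mono hT)) (map_mono hU)

theorem map_ι_span_singleton_mul_self (a : M) :
    (R ∙ a).map (ι R) * (R ∙ a).map (ι R) = ⊥ := by
  rw [map_ι_span_singleton, span_mul_span, Set.singleton_mul_singleton, ι_sq_zero,
    span_singleton_eq_bot.2 rfl]

theorem map_ι_sup_mul_self_le (S T : Submodule R M) :
    (S ⊔ T).map (ι R) * (S ⊔ T).map (ι R) ≤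
      S.map (ι R) * (S ⊔ T).map (ι R) ⊔ T.map (ι R) * T.map (ι R) := by
  rw [Submodule.map_sup, Submodule.sup_mul, Submodule.mul_sup (T.map (ι R)), map_ι_mul_comm T S]
  exact sup_le le_sup_left
    (sup_le (le_sup_of_le_left (mul_le_mul_right le_sup_right _)) le_sup_right)

theorem map_ι_sup_cube_le (S T : Submodule R M) :
    (S ⊔ T).map (ι R) * (S ⊔ T).map (ι R) * (S ⊔ T).map (ι R) ≤
      S.map (ι R) * S.map (ι R) * (S ⊔ T).map (ι R) ⊔ S.map (ι R) * T.map (ι R) * T.map (ι R) ⊔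
        T.map (ι R) * T.map (ι R) * T.map (ι R) := by
  have hsq := map_ι_sup_mul_self_le S T
  have hS : S.map (ι R) * (S ⊔ T).map (ι R) * (S ⊔ T).map (ι R) ≤
      S.map (ι R) * S.map (ι R) * (S ⊔ T).map (ι R) ⊔ S.map (ι R) * T.map (ι R) * T.map (ι R) := by
    simpa only [mul_assoc, Submodule.mul_sup] using mul_le_mul_right hsq (S.map (ι R))
  calc (S ⊔ T).map (ι R) * (S ⊔ T).map (ι R) * (S ⊔ T).map (ι R)
      ≤ (S.map (ι R) * (S ⊔ T).map (ι R) ⊔ T.map (ι R) * T.map (ι R)) * (S ⊔ T).map (ι R) :=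
        mul_le_mul_left hsq _
    _ = S.map (ι R) * (S ⊔ T).map (ι R) * (S ⊔ T).map (ι R) ⊔
          (S.map (ι R) * T.map (ι R) * T.map (ι R) ⊔ T.map (ι R) * T.map (ι R) * T.map (ι R)) := by
        rw [Submodule.sup_mul, Submodule.map_sup S T, Submodule.mul_sup (T.map (ι R) * _),
          map_ι_mul_mul_right_comm T T S, map_ι_mul_comm T S]
    _ ≤ _ := by
        rw [← sup_assoc]
        exact sup_le_sup_right (sup_le hS le_sup_right) _

theorem ι_mul_ι_mul_ι_self (a b : M) : ι R a * ι R b * ι R a = 0 := by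
  rw [mul_assoc, ι_mul_ι_anticomm b, mul_neg, ← mul_assoc, ι_sq_zero, zero_mul, neg_zero]

theorem ι_mul_ι_mul_ι_rotate (a b c : M) : ι R a * ι R b * ι R c = ι R c * ι R a * ι R b := by
  rw [mul_assoc, ι_mul_ι_anticomm b c, mul_neg, ← mul_assoc, ι_mul_ι_anticomm a c, neg_mul, neg_neg]

theorem map_ι_span_pair_mul_self_le (a b : M) :
    (span R {a, b}).map (ι R) * (span R {a, b}).map (ι R) ≤ R ∙ (ι R a * ι R b) := by
  rw [span_insert]
  refine (map_ι_sup_mul_self_le (R ∙ a) (R ∙ b)).trans ?_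
  rw [map_ι_span_singleton_mul_self, sup_bot_eq, Submodule.map_sup, Submodule.mul_sup,
    map_ι_span_singleton_mul_self, bot_sup_eq, map_ι_span_singleton, map_ι_span_singleton,
    span_mul_span, Set.singleton_mul_singleton]

theorem map_ι_span_pair_cube_eq_bot (a b : M) :
    (span R {a, b}).map (ι R) * (span R {a, b}).map (ι R) * (span R {a, b}).map (ι R) = ⊥ := by
  refine eq_bot_iff.2 ((mul_le_mul_left (map_ι_span_pair_mul_self_le a b) _).trans ?_)
  rw [span_insert, Submodule.map_sup, Submodule.mul_sup, map_ι_span_singleton, map_ι_span_singleton,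
    span_mul_span, span_mul_span, Set.singleton_mul_singleton, Set.singleton_mul_singleton,
    ι_mul_ι_mul_ι_self, mul_assoc, ι_sq_zero, mul_zero, span_singleton_eq_bot.2 rfl, sup_idem]

theorem map_ι_mul_self_le_of_eq_sup {C : Submodule R M} {x d₁ d₂ : M}
    (hC : C = (R ∙ x) ⊔ span R {d₁, d₂}) :
    C.map (ι R) * C.map (ι R) ≤ (R ∙ x).map (ι R) * C.map (ι R) ⊔ R ∙ (ι R d₁ * ι R d₂) := by
  subst hC
  exact (map_ι_sup_mul_self_le _ _).trans (sup_le_sup_left (map_ι_span_pair_mul_self_le _ _) _)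

theorem map_ι_cube_le_of_eq_sup {C : Submodule R M} {x d₁ d₂ : M}
    (hC : C = (R ∙ x) ⊔ span R {d₁, d₂}) :
    C.map (ι R) * C.map (ι R) * C.map (ι R) ≤ R ∙ (ι R x * ι R d₁ * ι R d₂) := by
  subst hC
  refine (map_ι_sup_cube_le _ _).trans ?_
  rw [map_ι_span_singleton_mul_self, Submodule.bot_mul, map_ι_span_pair_cube_eq_bot, bot_sup_eq,
    sup_bot_eq, mul_assoc, map_ι_span_singleton, mul_assoc]
  refine (mul_le_mul_right (map_ι_span_pair_mul_self_le _ _) _).trans ?_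
  rw [span_mul_span, Set.singleton_mul_singleton]

theorem mul_ι_eq_zero_of_mem_map_ι_span_singleton_mul {x : M} {S : Submodule R M}
    {γ : ExteriorAlgebra R M} (hγ : γ ∈ (R ∙ x).map (ι R) * S.map (ι R)) : γ * ι R x = 0 := by
  have h := mul_mem_mul hγ (mem_map_of_mem (f := ι R) (mem_span_singleton_self x))
  rwa [map_ι_mul_mul_right_comm, map_ι_span_singleton_mul_self, Submodule.bot_mul, mem_bot] at h

theorem exists_mem_mul_map_ι_span_singleton_of_eq_sup {C E : Submodule R M} {x d₁ d₂ : M}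
    (hC : C = (R ∙ x) ⊔ span R {d₁, d₂}) {σ : ExteriorAlgebra R M}
    (hσ : σ ∈ C.map (ι R) * C.map (ι R) * E.map (ι R)) :
    ∃ g ∈ E, σ ∈ (R ∙ x).map (ι R) * C.map (ι R) * (⊤ : Submodule R M).map (ι R) ⊔
      C.map (ι R) * C.map (ι R) * (R ∙ g).map (ι R) := by
  have hle := mul_le_mul_left (map_ι_mul_self_le_of_eq_sup hC) (E.map (ι R))
  rw [Submodule.sup_mul] at hle
  obtain ⟨γ, hγ, _, hδ, rfl⟩ := mem_sup.1 (hle hσ)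
  obtain ⟨_, ⟨g, hg, rfl⟩, rfl⟩ := mem_span_singleton_mul.1 hδ
  have hd : ∀ d ∈ ({d₁, d₂} : Set M), d ∈ C := fun d hd => hC ▸ mem_sup_right (subset_span hd)
  refine ⟨g, hg, add_mem (mem_sup_left ?_) (mem_sup_right ?_)⟩
  · exact mul_le_mul_right (map_mono le_top) _ hγ
  · exact mul_mem_mul (mul_mem_mul (mem_map_of_mem (hd d₁ (by simp)))
      (mem_map_of_mem (hd d₂ (by simp)))) (mem_map_of_mem (mem_span_singleton_self g))

theorem map_ι_cube_sup_span_pair_le (S : Submodule R M) (a b : M) :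
    (S ⊔ span R {a, b}).map (ι R) * (S ⊔ span R {a, b}).map (ι R) * (S ⊔ span R {a, b}).map (ι R) ≤
      S.map (ι R) * S.map (ι R) * (⊤ : Submodule R M).map (ι R) ⊔
        S.map (ι R) * (R ∙ (ι R a * ι R b)) := by
  refine (map_ι_sup_cube_le _ _).trans ?_
  rw [map_ι_span_pair_cube_eq_bot, sup_bot_eq, mul_assoc _ ((span R {a, b}).map (ι R))]
  exact sup_le_sup (map_ι_mul_mul_mono le_rfl le_rfl le_top)
    (mul_le_mul_right (map_ι_span_pair_mul_self_le a b) _)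

end DegreeOne

section Field

variable {K M : Type*} [Field K] [AddCommGroup M] [Module K M]

theorem ιMulti_ne_zero_of_linearIndependent {n : ℕ} {v : Fin n → M}
    (hv : LinearIndependent K v) : ιMulti K n v ≠ 0 := by
  let s : Set.powersetCard (Fin n) n := ⟨Finset.univ, by simp⟩
  have hs : ⇑(Set.powersetCard.ofFinEmbEquiv.symm s) = id :=
    (Finset.orderEmbOfFin_unique s.prop (fun _ => Finset.mem_univ _) strictMono_id).symm
  have h := (exteriorPower.ιMulti_family_linearIndependent_field (n := n) hv).ne_zero s
  rw [exteriorPower.ιMulti_family, hs, Function.comp_id] at h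
  exact fun h0 => h (Subtype.ext h0)

theorem ι_mul_ι_mul_ι_ne_zero {a b c : M} (h : LinearIndependent K ![a, b, c]) :
    ι K a * ι K b * ι K c ≠ 0 := by
  simpa [ιMulti_apply, List.ofFn_succ, mul_assoc] using ιMulti_ne_zero_of_linearIndependent h

theorem exists_disjoint_sup_eq_finrank_add {S T : Submodule K M} [FiniteDimensional K T]
    (h : S ≤ T) :
    ∃ S', Disjoint S S' ∧ S ⊔ S' = T ∧ finrank K S + finrank K S' = finrank K T := by
  obtain ⟨S', hdisj, hsup⟩ := IsModularLattice.exists_disjoint_and_sup_eq h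
  have : FiniteDimensional K S := Submodule.finiteDimensional_of_le h
  have : FiniteDimensional K S' := Submodule.finiteDimensional_of_le (hsup ▸ le_sup_right)
  refine ⟨S', hdisj, hsup, ?_⟩
  rw [← finrank_sup_add_finrank_inf_eq, hsup, hdisj.eq_bot, finrank_bot, add_zero]

theorem exists_eq_span_pair_of_finrank_eq_two {D : Submodule K M} (h : finrank K D = 2) :
    ∃ a b, D = span K {a, b} := by
  have : FiniteDimensional K D := Module.finite_of_finrank_pos (by omega)
  let v := Module.finBasisOfFinrankEq K D h
  refine ⟨v 0, v 1, ?_⟩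
  have hv := congrArg (Submodule.map D.subtype) v.span_eq
  rw [Submodule.map_span, Submodule.map_top, range_subtype, ← Set.range_comp] at hv
  refine hv.symm.trans (congrArg (span K) ?_)
  ext
  simp [Fin.exists_fin_two, eq_comm]

theorem exists_span_pair_disjoint_sup_eq {S T : Submodule K M} [FiniteDimensional K T]
    (h : S ≤ T) (hST : finrank K T = finrank K S + 2) :
    ∃ a b, Disjoint S (span K {a, b}) ∧ S ⊔ span K {a, b} = T := by
  obtain ⟨D, hdisj, hsup, hrank⟩ := exists_disjoint_sup_eq_finrank_add h
  obtain ⟨a, b, rfl⟩ := exists_eq_span_pair_of_finrank_eq_two (show finrank K D = 2 by omega)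
  exact ⟨a, b, hdisj, hsup⟩

theorem exists_eq_span_singleton_sup_span_pair {C : Submodule K M} (hC : finrank K C = 3)
    {x : M} (hx : x ∈ C) (hx0 : x ≠ 0) :
    ∃ d₁ d₂, C = (K ∙ x) ⊔ span K {d₁, d₂} ∧ LinearIndependent K ![x, d₁, d₂] := by
  have : FiniteDimensional K C := Module.finite_of_finrank_pos (by omega)
  obtain ⟨d₁, d₂, -, hsup⟩ := exists_span_pair_disjoint_sup_eq
    ((span_singleton_le_iff_mem _ _).2 hx) (by rw [finrank_span_singleton hx0, hC])
  refine ⟨d₁, d₂, hsup.symm, ?_⟩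
  have hrange : Set.range ![x, d₁, d₂] = {x, d₁, d₂} := by
    ext; simp [eq_comm]; tauto
  rw [linearIndependent_iff_card_eq_finrank_span, Set.finrank, hrange, span_insert, hsup, hC,
    Fintype.card_fin]

theorem mem_map_ι_span_singleton_mul_of_mul_ι_eq_zero {C : Submodule K M} {x d₁ d₂ : M}
    (hC : C = (K ∙ x) ⊔ span K {d₁, d₂}) (hind : LinearIndependent K ![x, d₁, d₂])
    {β : ExteriorAlgebra K M} (hβ : β ∈ C.map (ι K) * C.map (ι K)) (hβx : β * ι K x = 0) :
    β ∈ (K ∙ x).map (ι K) * C.map (ι K) := by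
  obtain ⟨γ, hγ, _, hδ, rfl⟩ := mem_sup.1 (map_ι_mul_self_le_of_eq_sup hC hβ)
  obtain ⟨c, rfl⟩ := mem_span_singleton.1 hδ
  rw [add_mul, mul_ι_eq_zero_of_mem_map_ι_span_singleton_mul hγ, zero_add, smul_mul_assoc,
    ι_mul_ι_mul_ι_rotate d₁, smul_eq_zero] at hβx
  rw [hβx.resolve_right (ι_mul_ι_mul_ι_ne_zero hind), zero_smul, add_zero]
  exact hγ

theorem exists_ne_zero_mul_ι_eq_zero {C : Submodule K M} (hC : finrank K C = 3)
    {β β' : ExteriorAlgebra K M} (hβ : β ∈ C.map (ι K) * C.map (ι K))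
    (hβ' : β' ∈ C.map (ι K) * C.map (ι K)) :
    ∃ x ∈ C, x ≠ 0 ∧ β * ι K x = 0 ∧ β' * ι K x = 0 := by
  have : FiniteDimensional K C := Module.finite_of_finrank_pos (by omega)
  obtain ⟨x₀, hx₀, hx₀0⟩ := exists_mem_ne_zero_of_ne_bot (p := C) (by rintro rfl; simp at hC)
  obtain ⟨d₁, d₂, hCeq, -⟩ := exists_eq_span_singleton_sup_span_pair hC hx₀ hx₀0
  set Q := K ∙ (ι K x₀ * ι K d₁ * ι K d₂)
  -- `c ↦ (β ∧ c, β' ∧ c)` maps the 3-space `C` into two copies of the line `⋀³C`.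
  have hQ : ∀ β ∈ C.map (ι K) * C.map (ι K), ∀ c : C, β * ι K (c : M) ∈ Q := fun β hβ c =>
    map_ι_cube_le_of_eq_sup hCeq (mul_mem_mul hβ (mem_map_of_mem c.2))
  let φ : C →ₗ[K] Q × Q :=
    (((LinearMap.mulLeft K β) ∘ₗ ι K ∘ₗ C.subtype).codRestrict Q (hQ β hβ)).prod
      (((LinearMap.mulLeft K β') ∘ₗ ι K ∘ₗ C.subtype).codRestrict Q (hQ β' hβ'))
  have hQ1 : finrank K Q ≤ 1 := by simpa using finrank_span_le_card ({_} : Set _)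
  obtain ⟨x, hx, hx0⟩ := exists_mem_ne_zero_of_ne_bot
    (LinearMap.ker_ne_bot_of_finrank_lt (f := φ) (by rw [Module.finrank_prod, hC]; omega))
  refine ⟨x, x.2, fun h => hx0 (Subtype.ext h), ?_, ?_⟩
  · exact congrArg (fun p => ((p.1 : Q) : ExteriorAlgebra K M)) (LinearMap.mem_ker.1 hx)
  · exact congrArg (fun p => ((p.2 : Q) : ExteriorAlgebra K M)) (LinearMap.mem_ker.1 hx)

theorem exists_mem_map_ι_span_singleton_mul_of_mem_span_pair {C : Submodule K M}
    (hC : finrank K C = 3) {a b : M} {ρ : ExteriorAlgebra K M}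
    (hρ : ρ ∈ C.map (ι K) * C.map (ι K) * (span K {a, b}).map (ι K)) :
    ∃ x ∈ C, x ≠ 0 ∧ ρ ∈ (K ∙ x).map (ι K) * C.map (ι K) * (⊤ : Submodule K M).map (ι K) := by
  rw [span_insert, Submodule.map_sup, Submodule.mul_sup, map_ι_span_singleton,
    map_ι_span_singleton] at hρ
  obtain ⟨_, h₁, _, h₂, rfl⟩ := mem_sup.1 hρ
  obtain ⟨β, hβ, rfl⟩ := mem_mul_span_singleton.1 h₁
  obtain ⟨β', hβ', rfl⟩ := mem_mul_span_singleton.1 h₂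
  obtain ⟨x, hxC, hx0, hβx, hβ'x⟩ := exists_ne_zero_mul_ι_eq_zero hC hβ hβ'
  obtain ⟨d₁, d₂, hCeq, hind⟩ := exists_eq_span_singleton_sup_span_pair hC hxC hx0
  refine ⟨x, hxC, hx0, add_mem ?_ ?_⟩
  · exact mul_mem_mul (mem_map_ι_span_singleton_mul_of_mul_ι_eq_zero hCeq hind hβ hβx)
      (mem_map_of_mem mem_top)
  · exact mul_mem_mul (mem_map_ι_span_singleton_mul_of_mul_ι_eq_zero hCeq hind hβ' hβ'x)
      (mem_map_of_mem mem_top)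

theorem exists_mem_of_mem_map_ι_mul_mul_sup_span_pair {C E : Submodule K M}
    (hC : finrank K C = 3) {a b : M} {r : ExteriorAlgebra K M}
    (hr : r ∈ C.map (ι K) * C.map (ι K) * (E ⊔ span K {a, b}).map (ι K)) :
    ∃ x ∈ C, x ≠ 0 ∧ ∃ g ∈ E,
      r ∈ (K ∙ x).map (ι K) * C.map (ι K) * (⊤ : Submodule K M).map (ι K) ⊔
        C.map (ι K) * C.map (ι K) * (K ∙ g).map (ι K) := by
  rw [Submodule.map_sup, Submodule.mul_sup] at hr
  obtain ⟨σ, hσ, ρ, hρ, rfl⟩ := mem_sup.1 hr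
  obtain ⟨x, hxC, hx0, hρx⟩ := exists_mem_map_ι_span_singleton_mul_of_mem_span_pair hC hρ
  obtain ⟨d₁, d₂, hCeq, -⟩ := exists_eq_span_singleton_sup_span_pair hC hxC hx0
  obtain ⟨g, hg, hσg⟩ := exists_mem_mul_map_ι_span_singleton_of_eq_sup hCeq hσ
  exact ⟨x, hxC, hx0, g, hg, add_comm σ ρ ▸ add_mem (mem_sup_left hρx) hσg⟩

theorem exists_ι_mul_ι_eq_ι_mul_ι_of_mem_span_pair {a b f : M} (hf : f ∈ span K {a, b})
    (hf0 : f ≠ 0) : ∃ w, ι K a * ι K b = ι K f * ι K w := by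
  obtain ⟨c, d, rfl⟩ := mem_span_pair.1 hf
  by_cases hc : c = 0
  · have hd : d ≠ 0 := by rintro rfl; simp [hc] at hf0
    refine ⟨-d⁻¹ • a, ?_⟩
    simp [hc, hd, ι_mul_ι_anticomm b a]
  · refine ⟨c⁻¹ • b, ?_⟩
    simp [hc, add_mul]

theorem exists_plane_of_mem_map_ι_mul_mul_top [FiniteDimensional K M] {U E : Submodule K M}
    (hU : finrank K U = 4) {a b : M} (htop : U ⊔ E ⊔ span K {a, b} = ⊤) {u : M} (hu : u ∈ U)
    {α : ExteriorAlgebra K M}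
    (hα : α ∈ U.map (ι K) * U.map (ι K) * (⊤ : Submodule K M).map (ι K)) :
    ∃ W ≤ U, finrank K W = 2 ∧ u ∈ W ∧ ∃ g ∈ E,
      α ∈ W.map (ι K) * U.map (ι K) * (⊤ : Submodule K M).map (ι K) ⊔
        U.map (ι K) * U.map (ι K) * (U ⊔ K ∙ g).map (ι K) := by
  obtain ⟨u', hu', hu'0, huu'⟩ :=
    exists_ne_zero_mem_span_singleton (S := U) (by rintro rfl; simp at hU) hu
  obtain ⟨C, hdisj, hsup, hrank⟩ :=
    exists_disjoint_sup_eq_finrank_add ((span_singleton_le_iff_mem _ _).2 hu')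
  have hC : finrank K C = 3 := by rw [finrank_span_singleton hu'0, hU] at hrank; omega
  have hCU : C ≤ U := hsup ▸ le_sup_right
  have hsplit : U.map (ι K) * U.map (ι K) * (⊤ : Submodule K M).map (ι K) ≤
      (K ∙ u').map (ι K) * U.map (ι K) * (⊤ : Submodule K M).map (ι K) ⊔
        (C.map (ι K) * C.map (ι K) * U.map (ι K) ⊔
          C.map (ι K) * C.map (ι K) * (E ⊔ span K {a, b}).map (ι K)) := by
    have hsq := map_ι_sup_mul_self_le (K ∙ u') C
    rw [hsup] at hsq
    refine (mul_le_mul_left hsq _).trans_eq ?_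
    rw [Submodule.sup_mul]
    congr 1
    rw [← htop, sup_assoc, Submodule.map_sup, Submodule.mul_sup]
  obtain ⟨α₁, hα₁, _, hα₂, rfl⟩ := mem_sup.1 (hsplit hα)
  obtain ⟨α₀, hα₀, r, hr, rfl⟩ := mem_sup.1 hα₂
  obtain ⟨x, hxC, hx0, g, hg, hrx⟩ := exists_mem_of_mem_map_ι_mul_mul_sup_span_pair hC hr
  have hxu' : x ∉ K ∙ u' := fun h => hx0 (disjoint_def.1 hdisj x h hxC)
  refine ⟨K ∙ u' ⊔ K ∙ x,
    sup_le ((span_singleton_le_iff_mem _ _).2 hu') ((span_singleton_le_iff_mem _ _).2 (hCU hxC)),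
    by rw [finrank_sup_span_singleton hxu', finrank_span_singleton hu'0], mem_sup_left huu', g, hg,
    ?_⟩
  refine add_mem (mem_sup_left ?_) (add_mem (mem_sup_right ?_) ?_)
  · exact map_ι_mul_mul_mono le_sup_left le_rfl le_rfl hα₁
  · exact map_ι_mul_mul_mono hCU hCU le_sup_left hα₀
  · exact sup_le_sup (map_ι_mul_mul_mono le_sup_right hCU le_rfl)
      (map_ι_mul_mul_mono hCU hCU le_sup_right) hrx

theorem exists_le_sup_span_pair_finrank_succ [FiniteDimensional K M] {U : Submodule K M}
    {a b g : M} (hdisj : Disjoint U (span K {a, b})) (hab : span K {a, b} ≠ ⊥)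
    (hg : g ∈ span K {a, b}) :
    ∃ W, U ≤ W ∧ W ≤ U ⊔ span K {a, b} ∧ finrank K W = finrank K U + 1 ∧ g ∈ W ∧
      ι K a * ι K b ∈ W.map (ι K) * (⊤ : Submodule K M).map (ι K) := by
  obtain ⟨f, hf, hf0, hgf⟩ := exists_ne_zero_mem_span_singleton hab hg
  obtain ⟨w, hw⟩ := exists_ι_mul_ι_eq_ι_mul_ι_of_mem_span_pair hf hf0
  refine ⟨U ⊔ K ∙ f, le_sup_left, sup_le_sup_left ((span_singleton_le_iff_mem _ _).2 hf) _,
    finrank_sup_span_singleton fun h => hf0 (disjoint_def.1 hdisj f h hf), mem_sup_right hgf, ?_⟩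
  rw [hw]
  exact mul_mem_mul (mem_map_of_mem (mem_sup_right (mem_span_singleton_self f)))
    (mem_map_of_mem mem_top)

end Field

theorem wSpan_eq_map_ι_mul (S T U : Submodule ℂ V) :
    wSpan S T U = S.map (ι ℂ) * T.map (ι ℂ) * U.map (ι ℂ) := by
  rw [wSpan, ← span_eq (S.map (ι ℂ)), ← span_eq (T.map (ι ℂ)), ← span_eq (U.map (ι ℂ)),
    span_mul_span, span_mul_span]
  congr 1
  ext
  simp [Set.mem_mul, eq_comm, and_assoc]

theorem Y4_flags_exist (V₈ : Type*) [AddCommGroup V₈] [Module ℂ V₈]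
    (hdim : Module.finrank ℂ V₈ = 8)
    (U₄ U₆ : Submodule ℂ V₈) (h46 : U₄ ≤ U₆)
    (hU4 : Module.finrank ℂ U₄ = 4) (hU6 : Module.finrank ℂ U₆ = 6)
    (y : ExteriorAlgebra ℂ V₈) (hy : y ∈ wSpan U₄ U₄ ⊤ ⊔ wSpan U₆ U₆ U₆) :
    ∃ V₂ V₅ : Submodule ℂ V₈,
      Module.finrank ℂ V₂ = 2 ∧ Module.finrank ℂ V₅ = 5 ∧
      V₂ ≤ U₄ ∧ U₄ ≤ V₅ ∧ V₅ ≤ U₆ ∧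
      y ∈ wSpan V₅ V₅ V₅ ⊔ wSpan V₂ V₅ ⊤ := by
  have : FiniteDimensional ℂ V₈ := Module.finite_of_finrank_pos (by omega)
  simp only [wSpan_eq_map_ι_mul] at hy ⊢
  obtain ⟨e₄, e₅, hdisj, hU₆⟩ := exists_span_pair_disjoint_sup_eq h46 (by rw [hU4, hU6])
  obtain ⟨e₆, e₇, -, htop⟩ :=
    exists_span_pair_disjoint_sup_eq (le_top : U₆ ≤ ⊤) (by rw [finrank_top, hdim, hU6])
  subst hU₆
  obtain ⟨α, hα, _, hβ, rfl⟩ :=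
    mem_sup.1 (sup_le le_sup_left (map_ι_cube_sup_span_pair_le U₄ e₄ e₅) hy)
  obtain ⟨_, ⟨u, hu, rfl⟩, rfl⟩ := mem_mul_span_singleton.1 hβ
  obtain ⟨V₂, hV₂U₄, hV₂, huV₂, g, hg, hαg⟩ := exists_plane_of_mem_map_ι_mul_mul_top hU4 htop hu hα
  obtain ⟨V₅, hU₄V₅, hV₅U₆, hV₅, hgV₅, he₄₅⟩ := exists_le_sup_span_pair_finrank_succ hdisj
    (by rintro h; rw [h, sup_bot_eq, hU4] at hU6; omega) hg
  refine ⟨V₂, V₅, hV₂, by rw [hV₅, hU4], hV₂U₄, hU₄V₅, hV₅U₆, add_mem ?_ (mem_sup_right ?_)⟩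
  · rw [sup_comm]
    exact sup_le_sup (map_ι_mul_mul_mono le_rfl hU₄V₅ le_rfl) (map_ι_mul_mul_mono hU₄V₅ hU₄V₅
      (sup_le hU₄V₅ ((span_singleton_le_iff_mem _ _).2 hgV₅))) hαg
  · rw [mul_assoc]
    exact mul_mem_mul (mem_map_of_mem huV₂) he₄₅
end
end

section
/- Let R = ℂ[x₁, y₁, x₂, y₂, x₃, y₃] be the polynomial ring in six variables, with the symmetric group S₃ acting by ℂ-algebra automorphisms permuting the indices (sending xᵢ ↦ x_{σ(i)} and yᵢ ↦ y_{σ(i)} simultaneously). Let I = (x₁ − x₂, y₁ − y₂) and let q : R → R/I be the quotient map. Then the class q(x₃) does not belong to the image q(R^{S₃}) of the invariant subalgebra R^{S₃}. -/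
open MvPolynomial

noncomputable section

/-- The polynomial ring `R = ℂ[x₁,y₁,x₂,y₂,x₃,y₃]`: the variable `(i, 0)` is `x_{i+1}` and
the variable `(i, 1)` is `y_{i+1}`. -/
abbrev R : Type := MvPolynomial (Fin 3 × Fin 2) ℂ

/-- The action of `σ ∈ S₃` on `R`, permuting the `x`'s and the `y`'s simultaneously. -/
def permAct (σ : Equiv.Perm (Fin 3)) (p : R) : R :=
  MvPolynomial.rename (fun q => (σ q.1, q.2)) p

/-- `p ∈ R^{S₃}`: `p` is invariant under the simultaneous `S₃`-action. -/
def IsS3Invariant (p : R) : Prop := ∀ σ : Equiv.Perm (Fin 3), permAct σ p = p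

/-- The ideal `I = (x₁ − x₂, y₁ − y₂)`. -/
def I : Ideal R :=
  Ideal.span {X (0, 0) - X (1, 0), X (0, 1) - X (1, 1)}

/-!
The derivation `D = ∂/∂x₁ + ∂/∂x₂ - 2 ∂/∂x₃` kills both generators of `I`, so by the Leibniz rule
`D(I) ⊆ I`, and `(D f)(0) = 0` for `f ∈ I`. For an `S₃`-invariant `p` the partial derivatives
`∂p/∂xᵢ` agree at the origin, so `(D p)(0) = 0`, whereas `(D x₃)(0) = -2`; hence `p - x₃ ∉ I`.
-/
theorem Derivation.apply_mem_of_mem_span {A S : Type*} [CommSemiring A] [CommSemiring S]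
    [Algebra A S] (D : Derivation A S S) {s : Set S} {J : Ideal S} (hs : s ⊆ J)
    (hD : ∀ x ∈ s, D x ∈ J) {x : S} (hx : x ∈ Ideal.span s) : D x ∈ J := by
  induction hx using Submodule.span_induction with
  | mem x hx => exact hD x hx
  | zero => simp
  | add x y _ _ hx hy => simpa using J.add_mem hx hy
  | smul a x hxs hx =>
    rw [smul_eq_mul, Derivation.leibniz, smul_eq_mul, smul_eq_mul]
    exact J.add_mem (J.mul_mem_left a hx) (J.mul_mem_right _ (Ideal.span_le.mpr hs hxs))

theorem MvPolynomial.eval_zero_pderiv_of_rename_eq {σ R : Type*} [CommSemiring R] {f : σ → σ}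
    (hf : Function.Injective f) {p : MvPolynomial σ R} (hp : rename f p = p) (i : σ) :
    eval 0 (pderiv (f i) p) = eval 0 (pderiv i p) := by
  conv_lhs => rw [← hp]
  rw [pderiv_rename hf, eval_rename]
  rfl

theorem IsS3Invariant.eval_zero_pderiv_eq {p : R} (hp : IsS3Invariant p) (i j : Fin 3) :
    eval 0 (pderiv (i, 0) p) = eval 0 (pderiv (j, 0) p) := by
  have hswap : rename (Prod.map (Equiv.swap i j) id) p = p := hp (Equiv.swap i j)
  have h := eval_zero_pderiv_of_rename_eq
    ((Equiv.swap i j).injective.prodMap Function.injective_id) hswap (i, 0)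
  simpa only [Prod.map_apply, Equiv.swap_apply_left, id_eq] using h.symm

theorem eval_zero_of_mem_I {f : R} (hf : f ∈ I) : eval 0 f = 0 := by
  refine (Ideal.span_le (I := RingHom.ker (eval 0))).mpr ?_ hf
  rintro g (rfl | rfl) <;> simp

theorem x3_not_in_image_of_invariants :
    ¬ ∃ p : R, IsS3Invariant p ∧ Ideal.Quotient.mk I p = Ideal.Quotient.mk I (X (2, 0)) := by
  rintro ⟨p, hinv, hq⟩
  let D : Derivation ℂ R R := pderiv (0, 0) + pderiv (1, 0) - 2 • pderiv (2, 0)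
  have hDI : ∀ f ∈ I, eval 0 (D f) = 0 := fun f hf =>
    eval_zero_of_mem_I <| D.apply_mem_of_mem_span Ideal.subset_span
      (by rintro g (rfl | rfl) <;> simp [D, pderiv_X]) hf
  have hDp : eval 0 (D p) = 0 := by
    simp only [D, Derivation.coe_sub, Derivation.coe_add, Derivation.coe_smul, Pi.sub_apply,
      Pi.add_apply, Pi.smul_apply, map_sub, map_add, map_nsmul, hinv.eval_zero_pderiv_eq 0 2,
      hinv.eval_zero_pderiv_eq 1 2]
    ring
  have hDx : eval 0 (D (X (2, 0))) = -2 := by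
    simp [D, pderiv_X, map_ofNat]
  have h := hDI _ (Ideal.Quotient.eq.mp hq)
  rw [map_sub, map_sub, hDp, hDx] at h
  norm_num at h
end
end
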